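/- arXiv:math/0607302 — 2 statements merged into one kernel-verified Lean document; each statement's English description precedes it below -/
import Mathlib

section
/- Let $\alpha$ satisfy $\|k\alpha\| > c|k|^{-(1+{\varepsilon})}$ for all nonzero integers $k$, with $0<c<1$ and $0<{\varepsilon}\ll 1$. Then the Weyl sum $S = \sum_{k=1}^N e(k^2\alpha + k\beta)$ satisfies $|S| \lesssim N^{1/2+{\varepsilon}}$ for any $\beta\in\mathbb{R}$ and all $N \ge N_0(c,{\varepsilon})$. -/
/-- Distance from `θ` to the nearest integer. -/
noncomputable def nint (θ : ℝ) : ℝ := |θ - round θ|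

noncomputable def ee (x : ℝ) : ℂ := Complex.exp (2 * Real.pi * Complex.I * x)

lemma nint_nonneg' (x : ℝ) : 0 ≤ nint x := abs_nonneg _

lemma nint_nonneg (x : ℝ) : 0 ≤ nint x := abs_nonneg _

lemma nint_le_half (x : ℝ) : nint x ≤ 1/2 := abs_sub_round x

lemma nint_le_abs_sub_int (x : ℝ) (m : ℤ) : nint x ≤ |x - m| := by
  rcases eq_or_ne m (round x) with rfl | hm
  · exact le_of_eq rfl
  · have h1 : (1:ℝ) ≤ |(round x : ℝ) - m| := by
      have : round x - m ≠ 0 := by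
        intro h; apply hm; omega
      have h0 : (1:ℤ) ≤ |round x - m| := Int.one_le_abs (by omega)
      calc (1:ℝ) ≤ ((|round x - m| : ℤ) : ℝ) := by exact_mod_cast h0
        _ = |(round x : ℝ) - m| := by rw [Int.cast_abs]; push_cast; ring_nf
    have h2 : |x - round x| ≤ 1/2 := abs_sub_round x
    have h3 : |(round x : ℝ) - m| ≤ |x - round x| + |x - m| := by
      have := abs_sub_abs_le_abs_sub ((round x : ℝ) - m) 0
      calc |(round x:ℝ) - m| = |(round x : ℝ) - x + (x - m)| := by ring_nf
        _ ≤ |(round x:ℝ) - x| + |x - m| := abs_add_le _ _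
        _ = |x - round x| + |x - m| := by rw [abs_sub_comm]
    unfold nint
    linarith

lemma nint_intCast (m : ℤ) : nint (m : ℝ) = 0 := by
  unfold nint; rw [round_intCast]; simp

lemma nint_neg (x : ℝ) : nint (-x) = nint x := by
  apply le_antisymm
  · calc nint (-x) ≤ |(-x) - (-(round x) : ℤ)| := nint_le_abs_sub_int _ _
      _ = |x - round x| := by push_cast; rw [← abs_neg]; ring_nf
    
  · calc nint x ≤ |x - (-(round (-x)) : ℤ)| := nint_le_abs_sub_int _ _
      _ = |(-x) - round (-x)| := by push_cast; rw [← abs_neg]; ring_nf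

lemma ee_eq (x : ℝ) : ee x = Complex.exp (((2 * Real.pi * x : ℝ) : ℂ) * Complex.I) := by
  unfold ee; congr 1; push_cast; ring

lemma ee_eq' (x : ℝ) :
    ee x = ((Real.cos (2 * Real.pi * x) : ℝ) : ℂ) + ((Real.sin (2 * Real.pi * x) : ℝ) : ℂ) * Complex.I := by
  rw [ee_eq, Complex.exp_mul_I, Complex.ofReal_cos, Complex.ofReal_sin]

lemma norm_ee (x : ℝ) : ‖ee x‖ = 1 := by
  rw [ee_eq, Complex.norm_exp_ofReal_mul_I]

lemma normSq_ee_sub_one (θ : ℝ) : ‖ee θ - 1‖^2 = 4 * Real.sin (Real.pi * θ)^2 := by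
  rw [ee_eq']
  rw [Complex.sq_norm, Complex.normSq_apply]
  simp only [Complex.add_re, Complex.add_im, Complex.mul_re, Complex.mul_im,
    Complex.I_re, Complex.I_im, Complex.one_re, Complex.one_im,
    Complex.sub_re, Complex.sub_im, Complex.ofReal_re, Complex.ofReal_im]
  have h2 := Real.cos_two_mul (Real.pi * θ)
  have h3 : (2:ℝ) * Real.pi * θ = 2 * (Real.pi * θ) := by ring
  have h4 := Real.sin_sq_add_cos_sq (Real.pi * θ)
  have h5 := Real.sin_sq_add_cos_sq (2 * (Real.pi * θ))
  rw [h3]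
  nlinarith [h2, h4, h5]

lemma abs_sin_pi_ge (θ : ℝ) : 2 * nint θ ≤ |Real.sin (Real.pi * θ)| := by
  set m := round θ with hm
  set r := θ - m with hr
  have hrabs : |r| ≤ 1/2 := abs_sub_round θ
  have hθ : θ = r + m := by rw [hr]; ring
  have h1 : Real.sin (Real.pi * θ) = (-1)^m * Real.sin (Real.pi * r) := by
    rw [hθ]
    have : Real.pi * (r + m) = Real.pi * r + m * Real.pi := by ring
    rw [this, Real.sin_add_int_mul_pi]
  have h2 : |Real.sin (Real.pi * θ)| = |Real.sin (Real.pi * r)| := by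
    rw [h1, abs_mul]
    have : |((-1:ℝ))^m| = 1 := by
      rcases Int.even_or_odd m with he | ho
      · rw [he.neg_one_zpow]; simp
      · rw [Odd.neg_one_zpow ho]; simp
    rw [this, one_mul]
  have h3 : |Real.sin (Real.pi * r)| = Real.sin (Real.pi * |r|) := by
    rcases abs_cases r with ⟨h, _⟩ | ⟨h, hneg⟩
    · rw [h]
      rw [abs_of_nonneg]
      apply Real.sin_nonneg_of_nonneg_of_le_pi
      · positivity
      · nlinarith [Real.pi_pos, hrabs, abs_nonneg r, h ▸ hrabs]
    · rw [h]
      have : Real.pi * -r = -(Real.pi * r) := by ring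
      rw [this, Real.sin_neg]
      rw [abs_of_nonpos]
      apply Real.sin_nonpos_of_nonpos_of_neg_pi_le
      · nlinarith [Real.pi_pos]
      · nlinarith [Real.pi_pos, hrabs, h ▸ hrabs]
  have h4 : 2 * |r| ≤ Real.sin (Real.pi * |r|) := by
    have := Real.mul_le_sin (x := Real.pi * |r|) (by positivity)
      (by nlinarith [Real.pi_pos, hrabs, abs_nonneg r])
    have hπ : Real.pi ≠ 0 := Real.pi_ne_zero
    calc 2 * |r| = 2 / Real.pi * (Real.pi * |r|) := by field_simp
      _ ≤ Real.sin (Real.pi * |r|) := this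
  unfold nint
  rw [h2, h3]
  exact h4






lemma ee_ne_one {θ : ℝ} (h : 0 < nint θ) : ee θ ≠ 1 := by
  intro heq
  unfold ee at heq
  rw [Complex.exp_eq_one_iff] at heq
  obtain ⟨n, hn⟩ := heq
  have h2 : (θ : ℂ) = (n : ℂ) := by
    have hne : (2 * (Real.pi:ℂ) * Complex.I) ≠ 0 := by
      simp [Real.pi_ne_zero, Complex.I_ne_zero]
    apply mul_left_cancel₀ hne
    rw [mul_comm ((n:ℂ)) _] at hn
    linear_combination hn
  have h3 : θ = (n : ℝ) := by exact_mod_cast h2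
  rw [h3, nint_intCast] at h
  exact lt_irrefl 0 h

lemma norm_ee_sub_one_ge (θ : ℝ) : 4 * nint θ ≤ ‖ee θ - 1‖ := by
  have h1 := normSq_ee_sub_one θ
  have h2 := abs_sin_pi_ge θ
  have h3 : 0 ≤ ‖ee θ - 1‖ := norm_nonneg _
  have h4 := nint_nonneg' θ
  nlinarith [abs_nonneg (Real.sin (Real.pi * θ)), sq_abs (Real.sin (Real.pi * θ))]

lemma geom_bound (θ : ℝ) (h : 0 < nint θ) (n : ℕ) :
    ‖∑ j ∈ Finset.range n, (ee θ)^j‖ ≤ 1 / (2 * nint θ) := by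
  rw [geom_sum_eq (ee_ne_one h) n]
  rw [norm_div]
  have hnum : ‖(ee θ)^n - 1‖ ≤ 2 := by
    calc ‖(ee θ)^n - 1‖ ≤ ‖(ee θ)^n‖ + ‖(1:ℂ)‖ := norm_sub_le _ _
      _ = 2 := by rw [norm_pow, norm_ee]; norm_num
  have hden := norm_ee_sub_one_ge θ
  have hden0 : (0:ℝ) < 4 * nint θ := by linarith
  calc ‖(ee θ)^n - 1‖ / ‖ee θ - 1‖ ≤ 2 / (4 * nint θ) := by
        apply div_le_div₀ (by norm_num) hnum hden0 hden
      _ = 1 / (2 * nint θ) := by field_simp; ring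

lemma ee_mul (x y : ℝ) : ee x * ee y = ee (x + y) := by
  unfold ee; rw [← Complex.exp_add]; congr 1; push_cast; ring

lemma ee_conj (x : ℝ) : (starRingEnd ℂ) (ee x) = ee (-x) := by
  unfold ee
  rw [← Complex.exp_conj]
  congr 1
  simp only [map_mul, map_ofNat, Complex.conj_I, Complex.conj_ofReal]
  push_cast
  ring

lemma ee_pow (x : ℝ) (j : ℕ) : (ee x)^j = ee (j * x) := by
  unfold ee; rw [← Complex.exp_nat_mul]; congr 1; push_cast; ring

lemma weyl_sq (N : ℕ) (hN : 1 ≤ N) (α β : ℝ)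
    (hpos : ∀ m : ℤ, m ≠ 0 → 0 < nint (2 * (m:ℝ) * α)) :
    ‖∑ k ∈ Finset.Icc (1:ℤ) (N:ℤ), ee ((k:ℝ)^2*α + (k:ℝ)*β)‖^2
      ≤ (N:ℝ) + ∑ h ∈ Finset.Icc (1:ℤ) ((N:ℤ)-1), 1 / nint (2*(h:ℝ)*α) := by
  classical
  set A : Finset ℤ := Finset.Icc (1:ℤ) (N:ℤ) with hA
  set f : ℤ → ℂ := fun k => ee ((k:ℝ)^2*α + (k:ℝ)*β) with hf
  set S : ℂ := ∑ k ∈ A, f k with hS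
  set H : Finset ℤ := Finset.Icc (1-(N:ℤ)) ((N:ℤ)-1) with hH
  -- inner sums
  set a : ℤ → ℤ := fun h => max 1 (1-h) with ha
  set b : ℤ → ℤ := fun h => min (N:ℤ) ((N:ℤ)-h) with hb
  set n : ℤ → ℕ := fun h => (b h + 1 - a h).toNat with hn
  -- step 1: ‖S‖² = ‖S * conj S‖
  have step1 : ‖S‖^2 = ‖S * (starRingEnd ℂ) S‖ := by
    rw [norm_mul, RCLike.norm_conj, sq]
  -- step 2: expand into double sum over A ×ˢ A
  have step2 : S * (starRingEnd ℂ) S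
      = ∑ p ∈ A ×ˢ A, f p.1 * (starRingEnd ℂ) (f p.2) := by
    rw [hS, map_sum, Finset.sum_mul_sum, Finset.sum_product]
  -- step 3: fiber over h = k - l
  have step3 : ∑ p ∈ A ×ˢ A, f p.1 * (starRingEnd ℂ) (f p.2)
      = ∑ h ∈ H, ∑ p ∈ (A ×ˢ A).filter (fun p => p.1 - p.2 = h),
          f p.1 * (starRingEnd ℂ) (f p.2) := by
    rw [Finset.sum_fiberwise_of_maps_to]
    intro p hp
    simp only [hA, Finset.mem_product, Finset.mem_Icc] at hp
    simp only [hH, Finset.mem_Icc]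
    omega
  -- step 5: each fiber sum as geometric sum
  have step5 : ∀ h ∈ H, ∑ p ∈ (A ×ˢ A).filter (fun p => p.1 - p.2 = h),
      f p.1 * (starRingEnd ℂ) (f p.2)
      = ee ((h:ℝ)^2*α + (h:ℝ)*β) * ee (2*(h:ℝ)*α*(a h : ℝ)) *
        ∑ j ∈ Finset.range (n h), (ee (2*(h:ℝ)*α))^j := by
    intro h _
    rw [Finset.mul_sum]
    apply Finset.sum_nbij' (i := fun p => (p.2 - a h).toNat) (j := fun j => (a h + j + h, a h + j))
    · intro p hp
      simp only [Finset.mem_product, Finset.mem_Icc, Finset.mem_filter, hA] at hp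
      simp only [Finset.mem_range, hn, ha, hb]
      omega
    · intro j hj
      simp only [Finset.mem_range, hn, ha, hb] at hj
      simp only [Finset.mem_filter, Finset.mem_product, Finset.mem_Icc, hA, ha, hb]
      omega
    · intro p hp
      simp only [Finset.mem_filter, Finset.mem_product, Finset.mem_Icc, hA, ha] at hp
      rw [Prod.ext_iff]
      constructor <;> simp only [ha] <;> omega
    · intro j hj
      simp only [Finset.mem_range, hn] at hj
      simp
    · intro p hp
      simp only [Finset.mem_product, Finset.mem_Icc, Finset.mem_filter, hA] at hp
      obtain ⟨⟨⟨h1, h2⟩, h3, h4⟩, h5⟩ := hp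
      have hcast : ((p.2 - a h).toNat : ℝ) = (p.2 : ℝ) - (a h : ℝ) := by
        have : ((p.2 - a h).toNat : ℤ) = p.2 - a h := by
          simp only [ha] at *; omega
        exact_mod_cast congrArg (Int.cast : ℤ → ℝ) this
      have hp1 : p.1 = p.2 + h := by omega
      simp only [hf, ee_conj, ee_pow, ee_mul, hp1]
      rw [hcast]
      congr 1
      push_cast
      ring
  -- norm bound per fiber
  have step6 : ∀ h ∈ H, ‖∑ p ∈ (A ×ˢ A).filter (fun p => p.1 - p.2 = h),
      f p.1 * (starRingEnd ℂ) (f p.2)‖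
      = ‖∑ j ∈ Finset.range (n h), (ee (2*(h:ℝ)*α))^j‖ := by
    intro h hh
    rw [step5 h hh, norm_mul, norm_mul, norm_ee, norm_ee, one_mul, one_mul]
  -- combine
  rw [step1, step2, step3]
  calc ‖∑ h ∈ H, ∑ p ∈ (A ×ˢ A).filter (fun p => p.1 - p.2 = h),
        f p.1 * (starRingEnd ℂ) (f p.2)‖
      ≤ ∑ h ∈ H, ‖∑ p ∈ (A ×ˢ A).filter (fun p => p.1 - p.2 = h),
        f p.1 * (starRingEnd ℂ) (f p.2)‖ := norm_sum_le _ _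
    _ = ∑ h ∈ H, ‖∑ j ∈ Finset.range (n h), (ee (2*(h:ℝ)*α))^j‖ :=
        Finset.sum_congr rfl step6
    _ ≤ (N:ℝ) + ∑ h ∈ Finset.Icc (1:ℤ) ((N:ℤ)-1), 1 / nint (2*(h:ℝ)*α) := by
        -- split off h = 0, and fold negatives onto positives
        have h0mem : (0:ℤ) ∈ H := by simp only [hH, Finset.mem_Icc]; omega
        rw [← Finset.add_sum_erase _ _ h0mem]
        have hzero : ‖∑ j ∈ Finset.range (n 0), (ee (2*((0:ℤ):ℝ)*α))^j‖ ≤ (N:ℝ) := by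
          calc ‖∑ j ∈ Finset.range (n 0), (ee (2*((0:ℤ):ℝ)*α))^j‖
              ≤ ∑ j ∈ Finset.range (n 0), ‖(ee (2*((0:ℤ):ℝ)*α))^j‖ := norm_sum_le _ _
            _ = ∑ j ∈ Finset.range (n 0), 1 := by
                apply Finset.sum_congr rfl; intro j _; rw [norm_pow, norm_ee, one_pow]
            _ = (n 0 : ℝ) := by simp
            _ ≤ (N:ℝ) := by
                have : n 0 ≤ N := by simp only [hn, ha, hb]; omega
                exact_mod_cast this
        have hsplit : H.erase 0 = Finset.Icc (1-(N:ℤ)) (-1) ∪ Finset.Icc 1 ((N:ℤ)-1) := by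
          ext x
          simp only [Finset.mem_erase, Finset.mem_union, Finset.mem_Icc, hH]
          omega
        have hdisj : Disjoint (Finset.Icc (1-(N:ℤ)) (-1)) (Finset.Icc 1 ((N:ℤ)-1)) := by
          rw [Finset.disjoint_left]
          intro x hx hx'
          simp only [Finset.mem_Icc] at hx hx'
          omega
        have gb : ∀ h : ℤ, h ≠ 0 → ‖∑ j ∈ Finset.range (n h), (ee (2*(h:ℝ)*α))^j‖
            ≤ 1 / (2 * nint (2*(h:ℝ)*α)) := fun h hh => geom_bound _ (hpos h hh) _
        have hneg : ∀ h : ℤ, nint (2*((-h:ℤ):ℝ)*α) = nint (2*(h:ℝ)*α) := by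
          intro h
          have : (2*((-h:ℤ):ℝ)*α) = -(2*(h:ℝ)*α) := by push_cast; ring
          rw [this, nint_neg]
        refine add_le_add hzero ?_
        rw [hsplit, Finset.sum_union hdisj]
        ·
          have e1 : ∑ h ∈ Finset.Icc (1-(N:ℤ)) (-1),
              ‖∑ j ∈ Finset.range (n h), (ee (2*(h:ℝ)*α))^j‖
              ≤ ∑ h ∈ Finset.Icc (1:ℤ) ((N:ℤ)-1), 1 / (2 * nint (2*(h:ℝ)*α)) := by
            rw [show ∑ h ∈ Finset.Icc (1:ℤ) ((N:ℤ)-1), 1 / (2 * nint (2*(h:ℝ)*α))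
                = ∑ h ∈ Finset.Icc (1-(N:ℤ)) (-1), 1 / (2 * nint (2*(h:ℝ)*α)) from ?_]
            · apply Finset.sum_le_sum
              intro h hh
              simp only [Finset.mem_Icc] at hh
              exact gb h (by omega)
            · apply Finset.sum_nbij' (i := fun h => -h) (j := fun h => -h)
              · intro x hx; simp only [Finset.mem_Icc] at *; omega
              · intro x hx; simp only [Finset.mem_Icc] at *; omega
              · intro x _; ring
              · intro x _; ring
              · intro x _
                rw [hneg x]
          have e2 : ∑ h ∈ Finset.Icc (1:ℤ) ((N:ℤ)-1),
              ‖∑ j ∈ Finset.range (n h), (ee (2*(h:ℝ)*α))^j‖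
              ≤ ∑ h ∈ Finset.Icc (1:ℤ) ((N:ℤ)-1), 1 / (2 * nint (2*(h:ℝ)*α)) := by
            apply Finset.sum_le_sum
            intro h hh
            simp only [Finset.mem_Icc] at hh
            exact gb h (by omega)
          have e3 : ∀ h ∈ Finset.Icc (1:ℤ) ((N:ℤ)-1),
              1 / (2 * nint (2*(h:ℝ)*α)) + 1 / (2 * nint (2*(h:ℝ)*α))
              = 1 / nint (2*(h:ℝ)*α) := by
            intro h hh
            simp only [Finset.mem_Icc] at hh
            have := hpos h (by omega)
            rw [← add_div, div_eq_div_iff (mul_pos two_pos this).ne' this.ne']; ring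
          calc _ ≤ ∑ h ∈ Finset.Icc (1:ℤ) ((N:ℤ)-1), 1 / (2 * nint (2*(h:ℝ)*α))
                  + ∑ h ∈ Finset.Icc (1:ℤ) ((N:ℤ)-1), 1 / (2 * nint (2*(h:ℝ)*α)) :=
                add_le_add e1 e2
            _ = _ := by rw [← Finset.sum_add_distrib]; exact Finset.sum_congr rfl e3

lemma harmonic_le (M : ℕ) : ∑ j ∈ Finset.Icc 1 M, (1:ℝ)/j ≤ 1 + Real.log M := by
  induction M with
  | zero => simp
  | succ M ih =>
    rw [Finset.sum_Icc_succ_top (by omega)]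
    rcases Nat.eq_zero_or_pos M with rfl | hM
    · norm_num
    · have hM0 : (0:ℝ) < M := by exact_mod_cast hM
      have key : (1:ℝ)/((M:ℝ)+1) ≤ Real.log ((M:ℝ)+1) - Real.log M := by
        have h1 : Real.log ((M:ℝ)/((M:ℝ)+1)) ≤ (M:ℝ)/((M:ℝ)+1) - 1 :=
          Real.log_le_sub_one_of_pos (by positivity)
        rw [Real.log_div (by positivity) (by positivity)] at h1
        have h2 : (M:ℝ)/((M:ℝ)+1) - 1 = -(1/((M:ℝ)+1)) := by field_simp; ring
        rw [h2] at h1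
        linarith
      push_cast
      linarith

lemma sum_inv_nint_le (c ε : ℝ) (hc : 0 < c) (hε : 0 < ε) (N : ℕ) (hN : 1 ≤ N) (α : ℝ)
    (hdio : ∀ k : ℤ, k ≠ 0 → c * |(k:ℝ)|^(-(1+ε)) < nint ((k:ℝ)*α)) :
    ∑ h ∈ Finset.Icc (1:ℤ) ((N:ℤ)-1), 1 / nint (2*(h:ℝ)*α)
      ≤ (3 * (1 + Real.log N)) * (c⁻¹ * ((2*N:ℝ))^(1+ε)) := by
  classical
  set δ : ℝ := c * ((2*N:ℝ))^(-(1+ε)) with hδ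
  have h2N : (0:ℝ) < 2*N := by positivity
  have hδpos : 0 < δ := by rw [hδ]; positivity
  have hkey : ∀ k : ℤ, k ≠ 0 → |k| ≤ 2*(N:ℤ) → δ < nint ((k:ℝ)*α) := by
    intro k hk hkle
    have habs : (0:ℝ) < |(k:ℝ)| := by
      simp only [abs_pos]; exact_mod_cast hk
    have hle : |(k:ℝ)| ≤ 2*N := by
      have : ((|k|:ℤ):ℝ) ≤ ((2*(N:ℤ) : ℤ):ℝ) := by exact_mod_cast hkle
      rw [Int.cast_abs] at this; push_cast at this ⊢; linarith
    have hrp := Real.rpow_le_rpow_of_nonpos habs hle (by linarith : -(1+ε) ≤ 0)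
    calc δ ≤ c * |(k:ℝ)|^(-(1+ε)) := by
          rw [hδ]; exact mul_le_mul_of_nonneg_left hrp hc.le
      _ < nint ((k:ℝ)*α) := hdio k hk
  set F : Finset ℤ := Finset.Icc (1:ℤ) ((N:ℤ)-1) with hF
  set d : ℤ → ℝ := fun h => nint (2*(h:ℝ)*α) with hd
  have hdpos : ∀ h ∈ F, δ < d h := by
    intro h hh
    simp only [hF, Finset.mem_Icc] at hh
    have : 2*(h:ℝ)*α = ((2*h:ℤ):ℝ)*α := by push_cast; ring
    rw [hd]; simp only; rw [this]
    exact hkey (2*h) (by omega) (by rw [abs_le]; omega)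
  have hsep : ∀ h ∈ F, ∀ h' ∈ F, h ≠ h' →
      δ < nint ((2*(h:ℝ)*α) - (2*(h':ℝ)*α)) := by
    intro h hh h' hh' hne
    simp only [hF, Finset.mem_Icc] at hh hh'
    have harg : (2*(h:ℝ)*α) - (2*(h':ℝ)*α) = ((2*(h-h'):ℤ):ℝ)*α := by push_cast; ring
    rw [harg]
    exact hkey _ (by omega) (by rw [abs_le]; omega)
  set s : ℤ → ℝ := fun h => 2*(h:ℝ)*α - round (2*(h:ℝ)*α) with hs
  have habs_s : ∀ h, |s h| = d h := fun h => rfl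
  set ψ : ℤ → ℤ := fun h => ⌊s h / δ⌋ with hψ
  have hψinj : ∀ h ∈ F, ∀ h' ∈ F, h ≠ h' → ψ h ≠ ψ h' := by
    intro h hh h' hh' hne heq
    have h1 : |s h / δ - s h' / δ| < 1 := Int.abs_sub_lt_one_of_floor_eq_floor heq
    have h2 : |s h - s h'| < δ := by
      rw [div_sub_div_same, abs_div, abs_of_pos hδpos, div_lt_one hδpos] at h1
      exact h1
    have h3 : nint ((2*(h:ℝ)*α) - (2*(h':ℝ)*α)) ≤ |s h - s h'| := by
      have harg : s h - s h' = ((2*(h:ℝ)*α) - (2*(h':ℝ)*α))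
          - ((round (2*(h:ℝ)*α) - round (2*(h':ℝ)*α) : ℤ) : ℝ) := by
        rw [hs]; push_cast; ring
      rw [harg]
      exact nint_le_abs_sub_int _ _
    have := hsep h hh h' hh' hne
    linarith
  -- injectivity of d
  have hdinj : ∀ h ∈ F, ∀ h' ∈ F, h ≠ h' → d h ≠ d h' := by
    intro h hh h' hh' hne heq
    simp only [hF, Finset.mem_Icc] at hh hh'
    have habs : |s h| = |s h'| := by rw [habs_s, habs_s, heq]
    rcases abs_eq_abs.mp habs with hcase | hcase
    · have h3 : nint ((2*(h:ℝ)*α) - (2*(h':ℝ)*α)) ≤ |s h - s h'| := by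
        have harg : s h - s h' = ((2*(h:ℝ)*α) - (2*(h':ℝ)*α))
            - ((round (2*(h:ℝ)*α) - round (2*(h':ℝ)*α) : ℤ) : ℝ) := by
          rw [hs]; push_cast; ring
        rw [harg]; exact nint_le_abs_sub_int _ _
      have h4 := hsep h (by simp [hF, Finset.mem_Icc]; omega) h'
        (by simp [hF, Finset.mem_Icc]; omega) hne
      rw [hcase] at h3
      simp at h3
      linarith
    · -- s h = - s h' : then 2(h+h')α is an integer
      have h3 : nint ((2*(h:ℝ)*α) + (2*(h':ℝ)*α)) ≤ |s h + s h'| := by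
        have harg : s h + s h' = ((2*(h:ℝ)*α) + (2*(h':ℝ)*α))
            - ((round (2*(h:ℝ)*α) + round (2*(h':ℝ)*α) : ℤ) : ℝ) := by
          rw [hs]; push_cast; ring
        rw [harg]; exact nint_le_abs_sub_int _ _
      have hz : s h + s h' = 0 := by rw [hcase]; ring
      rw [hz] at h3
      simp at h3
      have harg2 : (2*(h:ℝ)*α) + (2*(h':ℝ)*α) = ((2*(h+h'):ℤ):ℝ)*α := by push_cast; ring
      rw [harg2] at h3
      have h5 := hdio (2*(h+h')) (by omega)
      have h6 : 0 < c * |((2*(h+h'):ℤ):ℝ)|^(-(1+ε)) := by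
        have : ((2*(h+h'):ℤ):ℝ) ≠ 0 := by
          simp only [ne_eq, Int.cast_eq_zero]; omega
        positivity
      have h7 := nint_nonneg' (((2*(h+h'):ℤ):ℝ)*α)
      linarith
  -- counting claim
  have claim1 : ∀ h ∈ F, ((F.filter (fun h' => d h' ≤ d h)).card : ℝ) ≤ 3 * d h / δ := by
    intro h hh
    have hρδ : δ < d h := hdpos h hh
    set ρ := d h with hρ
    set G := F.filter (fun h' => d h' ≤ d h) with hG
    have hρpos : 0 < ρ := lt_trans hδpos hρδ
    have hFloor0 : ⌊-ρ/δ⌋ ≤ 0 := by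
      apply Int.floor_nonpos
      rw [neg_div]
      exact neg_nonpos.mpr (by positivity)
    have hFloor0' : 0 ≤ ⌊ρ/δ⌋ := by
      apply Int.floor_nonneg.mpr
      positivity
    have hmem0 : (0:ℤ) ∈ Finset.Icc ⌊-ρ/δ⌋ ⌊ρ/δ⌋ := by
      simp only [Finset.mem_Icc]; omega
    have hmapsto : ∀ h' ∈ G, ψ h' ∈ (Finset.Icc ⌊-ρ/δ⌋ ⌊ρ/δ⌋).erase 0 := by
      intro h' hh'
      simp only [hG, Finset.mem_filter] at hh'
      obtain ⟨hh'F, hh'le⟩ := hh'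
      have hd' : δ < d h' := hdpos h' hh'F
      have hsabs : |s h'| = d h' := habs_s h'
      have hsub : s h' ≤ ρ := le_trans (le_trans (le_abs_self _) hsabs.le) hh'le
      have hslb : -ρ ≤ s h' := by
        have := neg_abs_le (s h')
        rw [hsabs] at this
        linarith
      simp only [Finset.mem_erase, Finset.mem_Icc, hψ]
      refine ⟨?_, ?_, ?_⟩
      · -- ψ h' ≠ 0
        rcases le_or_gt 0 (s h') with hpos | hneg
        · have : s h' = d h' := by rw [← hsabs, abs_of_nonneg hpos]
          have h1 : (1:ℝ) ≤ s h' / δ := by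
            rw [le_div_iff₀ hδpos]; linarith
          have := Int.le_floor.mpr (by exact_mod_cast h1 : ((1:ℤ):ℝ) ≤ s h' / δ)
          omega
        · have : s h' = -(d h') := by
            rw [← hsabs, abs_of_neg hneg]; ring
          have h1 : s h' / δ < 0 := div_neg_of_neg_of_pos hneg hδpos
          have h2 : (⌊s h' / δ⌋ : ℝ) ≤ s h'/δ := Int.floor_le _
          have : (⌊s h' / δ⌋ : ℝ) < 0 := lt_of_le_of_lt h2 h1
          have : ⌊s h' / δ⌋ < 0 := by exact_mod_cast this
          omega
      · exact Int.floor_le_floor (by gcongr)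
      · exact Int.floor_le_floor (by gcongr)
    -- cardinality bound
    have hinjG : Set.InjOn ψ ↑G := by
      intro x hx y hy hxy
      simp only [hG, Finset.coe_filter, Set.mem_setOf_eq] at hx hy
      by_contra hne
      exact hψinj x hx.1 y hy.1 hne hxy
    have hcard1 : G.card = (G.image ψ).card := (Finset.card_image_of_injOn hinjG).symm
    have hcard2 : (G.image ψ) ⊆ (Finset.Icc ⌊-ρ/δ⌋ ⌊ρ/δ⌋).erase 0 := by
      intro x hx
      obtain ⟨h', hh', rfl⟩ := Finset.mem_image.mp hx
      exact hmapsto h' hh'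
    have hcard3 : (G.card : ℤ) ≤ ⌊ρ/δ⌋ - ⌊-ρ/δ⌋ := by
      have h4 := Finset.card_le_card hcard2
      rw [Finset.card_erase_of_mem hmem0, Int.card_Icc] at h4
      rw [hcard1]
      omega
    have hfl1 : (⌊ρ/δ⌋ : ℝ) ≤ ρ/δ := Int.floor_le _
    have hfl2 : -ρ/δ < (⌊-ρ/δ⌋ : ℝ) + 1 := Int.lt_floor_add_one _
    have hratio : 1 ≤ ρ/δ := (one_le_div hδpos).mpr hρδ.le
    have hcast : (G.card : ℝ) ≤ (⌊ρ/δ⌋ : ℝ) - (⌊-ρ/δ⌋ : ℝ) := by exact_mod_cast hcard3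
    have hgoal : (G.card : ℝ) ≤ 2*(ρ/δ) + 1 := by
      have hx : -(ρ/δ) < (⌊-ρ/δ⌋ : ℝ) + 1 := by
        have : -ρ/δ = -(ρ/δ) := by ring
        rw [← this]; exact hfl2
      linarith [hcast, hfl1, hx]
    calc (G.card : ℝ) ≤ 2*(ρ/δ) + 1 := hgoal
      _ ≤ 3*(ρ/δ) := by linarith
      _ = 3 * ρ / δ := by ring
  -- ranks
  set r : ℤ → ℕ := fun h => (F.filter (fun h' => d h' ≤ d h)).card with hr
  have hrpos : ∀ h ∈ F, 1 ≤ r h := by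
    intro h hh
    have hmem : h ∈ F.filter (fun h' => d h' ≤ d h) := by
      simp only [Finset.mem_filter]; exact ⟨hh, le_refl _⟩
    have hpos := Finset.card_pos.mpr ⟨h, hmem⟩
    simp only [hr]
    omega
  have hrle : ∀ h ∈ F, r h ≤ N - 1 := by
    intro h hh
    have h1 : (F.filter (fun h' => d h' ≤ d h)).card ≤ F.card := Finset.card_filter_le _ _
    have h2 : F.card = N - 1 := by
      rw [hF, Int.card_Icc]
      omega
    simp only [hr]
    omega
  have hrinj : ∀ h ∈ F, ∀ h' ∈ F, h ≠ h' → r h ≠ r h' := by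
    have key : ∀ h ∈ F, ∀ h' ∈ F, d h < d h' → r h < r h' := by
      intro h hh h' hh' hlt
      apply Finset.card_lt_card
      rw [Finset.ssubset_iff_of_subset]
      · exact ⟨h', by simp only [Finset.mem_filter]; exact ⟨hh', le_refl _⟩,
          by simp only [Finset.mem_filter]; push_neg; intro _; linarith⟩
      · apply Finset.monotone_filter_right
        intro x _ hx
        exact le_trans hx hlt.le
    intro h hh h' hh' hne
    rcases (hdinj h hh h' hh' hne).lt_or_gt with hlt | hlt
    · exact (key h hh h' hh' hlt).ne
    · exact (key h' hh' h hh hlt).ne'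
  -- sum bound
  have step1 : ∑ h ∈ F, 1 / d h ≤ ∑ h ∈ F, (3/δ) * (1 / (r h : ℝ)) := by
    apply Finset.sum_le_sum
    intro h hh
    have hdh : 0 < d h := lt_trans hδpos (hdpos h hh)
    have hrh : (0:ℝ) < (r h : ℝ) := by
      have := hrpos h hh; positivity
    have hclaim := claim1 h hh
    have h1 : (r h : ℝ) * δ ≤ 3 * d h := by
      have := mul_le_mul_of_nonneg_right hclaim hδpos.le
      rw [div_mul_cancel₀] at this
      · linarith
      · exact hδpos.ne'
    rw [div_mul_div_comm, div_le_div_iff₀ hdh (by positivity)]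
    nlinarith [h1]
  -- sum of reciprocal ranks
  have step2 : ∑ h ∈ F, (1 / (r h : ℝ)) ≤ ∑ j ∈ Finset.Icc 1 (N-1), (1:ℝ)/j := by
    have hinj : ∀ x ∈ F, ∀ y ∈ F, r x = r y → x = y := by
      intro x hx y hy hxy
      by_contra hne
      exact hrinj x hx y hy hne hxy
    have himg := Finset.sum_image (s := F) (g := r) (f := fun j : ℕ => (1:ℝ)/(j:ℝ)) hinj
    rw [← himg]
    apply Finset.sum_le_sum_of_subset_of_nonneg
    · intro j hj
      obtain ⟨h, hh, rfl⟩ := Finset.mem_image.mp hj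
      simp only [Finset.mem_Icc]
      exact ⟨hrpos h hh, hrle h hh⟩
    · intro j _ _
      positivity
  have step3 : ∑ j ∈ Finset.Icc 1 (N-1), (1:ℝ)/j ≤ 1 + Real.log N := by
    refine le_trans (harmonic_le (N-1)) ?_
    have : Real.log ((N-1 : ℕ):ℝ) ≤ Real.log N := by
      rcases Nat.eq_zero_or_pos (N-1) with h0 | hpos'
      · rw [h0]
        simp only [Nat.cast_zero, Real.log_zero]
        exact Real.log_nonneg (by exact_mod_cast hN)
      · apply Real.log_le_log (by exact_mod_cast hpos')
        exact_mod_cast Nat.sub_le N 1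
    linarith
  -- put together
  have hlogN : (0:ℝ) ≤ 1 + Real.log N := by
    have := Real.log_nonneg (by exact_mod_cast hN : (1:ℝ) ≤ (N:ℝ))
    linarith
  have hfinal : ∑ h ∈ F, 1 / d h ≤ (3/δ) * (1 + Real.log N) := by
    calc ∑ h ∈ F, 1 / d h ≤ ∑ h ∈ F, (3/δ) * (1 / (r h : ℝ)) := step1
      _ = (3/δ) * ∑ h ∈ F, (1 / (r h : ℝ)) := by rw [Finset.mul_sum]
      _ ≤ (3/δ) * (1 + Real.log N) := by
          apply mul_le_mul_of_nonneg_left (le_trans step2 step3) (by positivity)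
  have hδinv : 3/δ = 3 * (c⁻¹ * ((2*N:ℝ))^(1+ε)) := by
    rw [hδ, Real.rpow_neg h2N.le]
    field_simp
  calc ∑ h ∈ F, 1 / d h ≤ (3/δ) * (1 + Real.log N) := hfinal
    _ = (3 * (1 + Real.log N)) * (c⁻¹ * ((2*N:ℝ))^(1+ε)) := by rw [hδinv]; ring

lemma log_bound (ε : ℝ) (hε : 0 < ε) (x : ℝ) (hx1 : 1 ≤ x)
    (hx : (1 + 2/ε)^(2/ε) ≤ x) : 1 + Real.log x ≤ x ^ ε := by
  set t := x ^ (ε/2) with ht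
  have hx0 : (0:ℝ) < x := by linarith
  have ht0 : 0 < t := Real.rpow_pos_of_pos hx0 _
  have hlog : Real.log x ≤ (2/ε) * (t - 1) := by
    have h1 : Real.log t = (ε/2) * Real.log x := Real.log_rpow hx0 _
    have h2 : Real.log t ≤ t - 1 := Real.log_le_sub_one_of_pos ht0
    have h3 : Real.log x = (2/ε) * Real.log t := by
      rw [h1]; field_simp
    rw [h3]
    apply mul_le_mul_of_nonneg_left h2 (by positivity)
  have htlb : 1 + 2/ε ≤ t := by
    have hbase : (0:ℝ) ≤ 1 + 2/ε := by positivity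
    have := Real.rpow_le_rpow (Real.rpow_nonneg hbase _) hx (by positivity : (0:ℝ) ≤ ε/2)
    rwa [← Real.rpow_mul hbase, show (2/ε) * (ε/2) = 1 by field_simp, Real.rpow_one] at this
  have hsq : x ^ ε = t^2 := by
    rw [ht, ← Real.rpow_natCast (x ^ (ε/2)) 2, ← Real.rpow_mul hx0.le]
    norm_num
  rw [hsq]
  have h2ε : (0:ℝ) < 2/ε := by positivity
  have ht1 : (0:ℝ) ≤ t - 1 := by linarith
  have ht2 : (0:ℝ) ≤ t + 1 - 2/ε := by linarith
  nlinarith [hlog, mul_nonneg ht1 ht2]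

set_option maxHeartbeats 1000000 in
/-- Weyl sum estimate: for Diophantine `α`,
`|∑_{k=1}^N e(k²α + kβ)| ≲ N^{1/2+ε}`. -/
theorem stmt_16 (c ε : ℝ) (hc : 0 < c) (hc1 : c < 1) (hε : 0 < ε)
    (hε1 : ε < 1) :
    ∃ C > (0:ℝ), ∃ N₀ : ℕ, ∀ N : ℕ, N₀ ≤ N → ∀ α β : ℝ,
      (∀ k : ℤ, k ≠ 0 → c * |(k : ℝ)| ^ (-(1 + ε)) < nint ((k : ℝ) * α)) →
      ‖∑ k ∈ Finset.Icc 1 N, Complex.exp (2 * Real.pi * Complex.I *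
          ((((k : ℝ) ^ 2 * α + (k : ℝ) * β) : ℝ) : ℂ))‖
        ≤ C * (N : ℝ) ^ ((1:ℝ) / 2 + ε) := by
  refine ⟨13/c, by positivity, ⌈(1 + 2/ε)^(2/ε)⌉₊ + 1, ?_⟩
  intro N hN α β hdio
  have hN1 : 1 ≤ N := by omega
  have hNR : (1:ℝ) ≤ (N:ℝ) := by exact_mod_cast hN1
  have hNx : (1 + 2/ε)^(2/ε) ≤ (N:ℝ) := by
    calc (1 + 2/ε)^(2/ε) ≤ (⌈(1 + 2/ε)^(2/ε)⌉₊ : ℝ) := Nat.le_ceil _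
      _ ≤ (N:ℝ) := by exact_mod_cast le_trans (Nat.le_succ _) hN
  have hlog : 1 + Real.log N ≤ (N:ℝ) ^ ε := log_bound ε hε N hNR hNx
  -- convert statement sum to ℤ-indexed form
  have hsum : ∑ k ∈ Finset.Icc 1 N, Complex.exp (2 * Real.pi * Complex.I *
          ((((k : ℝ) ^ 2 * α + (k : ℝ) * β) : ℝ) : ℂ))
      = ∑ k ∈ Finset.Icc (1:ℤ) (N:ℤ), ee ((k:ℝ)^2*α + (k:ℝ)*β) := by
    apply Finset.sum_nbij' (i := fun k : ℕ => (k:ℤ)) (j := fun k : ℤ => k.toNat)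
    · intro k hk; simp only [Finset.mem_Icc] at *; omega
    · intro k hk; simp only [Finset.mem_Icc] at *; omega
    · intro k _; simp
    · intro k hk; simp only [Finset.mem_Icc] at hk; omega
    · intro k _
      unfold ee
      push_cast
      ring_nf
  rw [hsum]
  -- positivity of nint values
  have hpos : ∀ m : ℤ, m ≠ 0 → 0 < nint (2 * (m:ℝ) * α) := by
    intro m hm
    have harg : 2 * (m:ℝ) * α = ((2*m:ℤ):ℝ) * α := by push_cast; ring
    rw [harg]
    refine lt_trans ?_ (hdio (2*m) (by omega))
    have : ((2*m:ℤ):ℝ) ≠ 0 := by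
      simp only [ne_eq, Int.cast_eq_zero]; omega
    positivity
  have h1 := weyl_sq N hN1 α β hpos
  have h2 := sum_inv_nint_le c ε hc hε N hN1 α hdio
  set S := ∑ k ∈ Finset.Icc (1:ℤ) (N:ℤ), ee ((k:ℝ)^2*α + (k:ℝ)*β) with hS
  -- (2N)^(1+ε) ≤ 4 N^(1+ε)
  have h3 : ((2*N:ℝ))^(1+ε) ≤ 4 * (N:ℝ)^(1+ε) := by
    rw [Real.mul_rpow (by norm_num) (by positivity)]
    have : (2:ℝ)^(1+ε) ≤ 4 := by
      calc (2:ℝ)^(1+ε) ≤ (2:ℝ)^(2:ℝ) :=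
            Real.rpow_le_rpow_of_exponent_le (by norm_num) (by linarith)
        _ = 4 := by
            rw [show (2:ℝ) = ((2:ℕ):ℝ) by norm_num, Real.rpow_natCast]; norm_num
    have hN0 : (0:ℝ) ≤ (N:ℝ)^(1+ε) := by positivity
    nlinarith
  -- assemble: ‖S‖² ≤ (13/c) * N^(1+2ε)
  have hNpos : (0:ℝ) < N := by linarith
  have hrw : (N:ℝ)^ε * (N:ℝ)^((1:ℝ)+ε) = (N:ℝ)^((1:ℝ)+2*ε) := by
    rw [← Real.rpow_add hNpos]; ring_nf
  have hN12 : (N:ℝ) ≤ (N:ℝ)^((1:ℝ)+2*ε) := by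
    calc (N:ℝ) = (N:ℝ)^(1:ℝ) := (Real.rpow_one _).symm
      _ ≤ (N:ℝ)^((1:ℝ)+2*ε) := Real.rpow_le_rpow_of_exponent_le hNR (by linarith)
  have hc1' : (1:ℝ) ≤ 1/c := by
    rw [le_div_iff₀ hc]; linarith
  have hlogpos : (0:ℝ) ≤ 1 + Real.log N := by
    have := Real.log_nonneg hNR; linarith
  have hkey : ‖S‖^2 ≤ (13/c) * (N:ℝ)^((1:ℝ)+2*ε) := by
    have hB : (3 * (1 + Real.log N)) * (c⁻¹ * ((2*N:ℝ))^(1+ε))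
        ≤ 12 * c⁻¹ * ((N:ℝ)^ε * (N:ℝ)^((1:ℝ)+ε)) := by
      have hstep : (1 + Real.log N) * ((2*N:ℝ))^(1+ε) ≤ (N:ℝ)^ε * (4 * (N:ℝ)^(1+ε)) := by
        apply mul_le_mul hlog h3 (by positivity) (by positivity)
      have hcinv : (0:ℝ) ≤ c⁻¹ := by positivity
      calc (3 * (1 + Real.log N)) * (c⁻¹ * ((2*N:ℝ))^(1+ε))
          = 3 * c⁻¹ * ((1 + Real.log N) * ((2*N:ℝ))^(1+ε)) := by ring
        _ ≤ 3 * c⁻¹ * ((N:ℝ)^ε * (4 * (N:ℝ)^(1+ε))) := by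
            apply mul_le_mul_of_nonneg_left hstep (by positivity)
        _ = 12 * c⁻¹ * ((N:ℝ)^ε * (N:ℝ)^((1:ℝ)+ε)) := by ring_nf
    calc ‖S‖^2 ≤ (N:ℝ) + ∑ h ∈ Finset.Icc (1:ℤ) ((N:ℤ)-1), 1 / nint (2*(h:ℝ)*α) := h1
      _ ≤ (N:ℝ) + (3 * (1 + Real.log N)) * (c⁻¹ * ((2*N:ℝ))^(1+ε)) := by linarith
      _ ≤ (N:ℝ)^((1:ℝ)+2*ε) + 12 * c⁻¹ * (N:ℝ)^((1:ℝ)+2*ε) := by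
          rw [← hrw]; linarith
      _ ≤ (13/c) * (N:ℝ)^((1:ℝ)+2*ε) := by
          have hp : (0:ℝ) ≤ (N:ℝ)^((1:ℝ)+2*ε) := by positivity
          have hq : (1:ℝ) + 12/c ≤ 13/c := by
            have e12 : (12:ℝ)/c = 12*(1/c) := by ring
            have e13 : (13:ℝ)/c = 13*(1/c) := by ring
            linarith [hc1']
          have hmul := mul_le_mul_of_nonneg_right hq hp
          have hexp : (1 + 12/c) * (N:ℝ)^((1:ℝ)+2*ε)
              = (N:ℝ)^((1:ℝ)+2*ε) + 12 * c⁻¹ * (N:ℝ)^((1:ℝ)+2*ε) := by ring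
          linarith [hmul, hexp]
  -- conclude
  have hBpos : (0:ℝ) ≤ 13/c * (N:ℝ)^((1:ℝ)/2+ε) := by positivity
  have hsq2 : ((13:ℝ)/c * (N:ℝ)^((1:ℝ)/2+ε))^2 = (13/c)^2 * (N:ℝ)^((1:ℝ)+2*ε) := by
    rw [mul_pow, ← Real.rpow_natCast ((N:ℝ)^((1:ℝ)/2+ε)) 2, ← Real.rpow_mul hNpos.le]
    congr 1
    push_cast
    ring
  have hCC : (13/c) * (N:ℝ)^((1:ℝ)+2*ε) ≤ ((13:ℝ)/c * (N:ℝ)^((1:ℝ)/2+ε))^2 := by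
    rw [hsq2]
    have hp : (0:ℝ) ≤ (N:ℝ)^((1:ℝ)+2*ε) := by positivity
    have : (13:ℝ)/c ≤ (13/c)^2 := by
      have h1 : (1:ℝ) ≤ 13/c := by
        rw [le_div_iff₀ hc]; linarith
      nlinarith
    nlinarith
  have hfin : ‖S‖^2 ≤ ((13:ℝ)/c * (N:ℝ)^((1:ℝ)/2+ε))^2 := le_trans hkey hCC
  nlinarith [norm_nonneg S, hBpos, hfin]
end

section
/- For $N\in\mathbb{N}$ and ${\varepsilon} > 0$ define $\mathcal{J}(N,{\varepsilon})$ as the set of $\omega \in [0,1]$ such that for some $s$, the continued fraction denominators satisfy $q_{s-1}(\omega) \le N < q_s(\omega)$ and the partial quotient $a_s(\omega) > N^{\varepsilon}$. Then $\mathrm{mes}\,\mathcal{J}(N,{\varepsilon}) \le N^{-{\varepsilon}/2}$ provided $N > N_0({\varepsilon})$. -/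
open MeasureTheory

/-- `IsCF ω a q` says that `a` is the sequence of partial quotients of the
continued fraction of `ω` and `q` the sequence of denominators of its
convergents (via the complete quotients `θ`). -/
def IsCF (ω : ℝ) (a : ℕ → ℕ) (q : ℕ → ℕ) : Prop :=
  ∃ θ : ℕ → ℝ, θ 0 = ω ∧
    (∀ s, 0 < θ (s + 1) ∧ θ (s + 1) < 1 ∧
      1 / θ s = (a (s + 1) : ℝ) + θ (s + 1)) ∧
    q 0 = 1 ∧ q 1 = a 1 ∧ ∀ s, q (s + 2) = a (s + 2) * q (s + 1) + q s

/-- numerators of convergents -/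
def cfp (a : ℕ → ℕ) : ℕ → ℕ
  | 0 => 0
  | 1 => 1
  | n+2 => a (n+2) * cfp a (n+1) + cfp a n

/-- main CF approximation lemma -/
lemma cf_approx (ω : ℝ) (a q : ℕ → ℕ) (h : IsCF ω a q) (hω0 : 0 ≤ ω) (hω1 : ω ≤ 1)
    (s : ℕ) (hs : 1 ≤ s) :
    1 ≤ q (s-1) ∧ cfp a (s-1) ≤ q (s-1) ∧ 1 ≤ a s ∧
      |ω - (cfp a (s-1) : ℝ) / q (s-1)| ≤ 1 / ((a s : ℝ) * (q (s-1))^2) := by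
  obtain ⟨θ, hθ0, hrec, hq0, hq1, hqrec⟩ := h
  -- θ positive
  have hθpos : ∀ n, 0 < θ n := by
    intro n
    cases n with
    | zero =>
      rcases (hrec 0) with ⟨h1, h2, h3⟩
      by_contra hc
      push_neg at hc
      have h4 : 1 / θ 0 ≤ 0 := by
        rcases eq_or_lt_of_le hc with he | hl
        · rw [he]; simp
        · exact le_of_lt (div_neg_of_pos_of_neg one_pos hl)
      have h5 : (0:ℝ) ≤ a 1 := Nat.cast_nonneg _
      simp only [Nat.zero_add] at h3
      linarith
    | succ m => exact (hrec m).1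
  have hθle1 : ∀ n, θ n ≤ 1 := by
    intro n
    cases n with
    | zero => rw [hθ0]; exact hω1
    | succ m => exact le_of_lt (hrec m).2.1
  -- a (n+1) ≥ 1
  have ha : ∀ n, 1 ≤ a (n+1) := by
    intro n
    rcases hrec n with ⟨h1, h2, h3⟩
    have h4 : 1 ≤ 1 / θ n := (le_div_iff₀ (hθpos n)).mpr (by linarith [hθle1 n])
    have h5 : (0:ℝ) < a (n+1) := by nlinarith
    have : 0 < a (n+1) := by exact_mod_cast h5
    omega
  -- q ≥ 1 and q n ≤ q (n+1)
  have hq1' : (1:ℕ) ≤ q 1 := by rw [hq1]; exact ha 0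
  have hqmono : ∀ n, q n ≤ q (n+1) := by
    intro n
    match n with
    | 0 => rw [hq0]; exact hq1'
    | (m+1) =>
      rw [hqrec m]
      have := ha (m+1)
      nlinarith [Nat.zero_le (q m)]
  have hqpos : ∀ n, 1 ≤ q n := by
    intro n
    induction n with
    | zero => omega
    | succ m ih => exact le_trans ih (hqmono m)
  -- p ≤ q
  have hpq : ∀ n, cfp a n ≤ q n := by
    have H : ∀ n, cfp a n ≤ q n ∧ cfp a (n+1) ≤ q (n+1) := by
      intro n
      induction n with
      | zero =>
        constructor
        · simp [cfp, hq0]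
        · show cfp a 1 ≤ q 1
          simp only [cfp, hq1]
          exact ha 0
      | succ m ih =>
        refine ⟨ih.2, ?_⟩
        show cfp a (m+2) ≤ q (m+2)
        rw [hqrec m]
        show a (m+2) * cfp a (m+1) + cfp a m ≤ _
        exact Nat.add_le_add (Nat.mul_le_mul_left _ ih.2) ih.1
    exact fun n => (H n).1
  -- θ n * (a (n+1) + θ (n+1)) = 1
  have hθmul : ∀ n, θ n * ((a (n+1) : ℝ) + θ (n+1)) = 1 := by
    intro n
    have h3 := (hrec n).2.2
    have h0 := (hθpos n).ne'
    field_simp at h3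
    linarith
  -- main identity
  have hid : ∀ n, ω * ((q (n+1) : ℝ) + (q n : ℝ) * θ (n+1))
      = (cfp a (n+1) : ℝ) + (cfp a n : ℝ) * θ (n+1) := by
    intro n
    induction n with
    | zero =>
      have h := hθmul 0
      rw [hθ0] at h
      simp only [cfp, hq0, hq1, Nat.cast_one, Nat.cast_zero]
      push_cast
      nlinarith
    | succ m ih =>
      have h := hθmul (m+1)
      have hc2 : cfp a (m+2) = a (m+2) * cfp a (m+1) + cfp a m := rfl
      simp only [show m+1+1 = m+2 from rfl] at *
      rw [hqrec m, hc2]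
      push_cast
      linear_combination ((a (m+2) : ℝ) + θ (m+2)) * ih + ((cfp a m : ℝ) - ω * (q m : ℝ)) * h
  -- determinant
  have hdet : ∀ n, (cfp a n : ℤ) * (q (n+1) : ℤ) - (cfp a (n+1) : ℤ) * (q n : ℤ) = (-1)^(n+1) := by
    intro n
    induction n with
    | zero => simp [cfp, hq0, hq1]
    | succ m ih =>
      have hc2 : cfp a (m+2) = a (m+2) * cfp a (m+1) + cfp a m := rfl
      simp only [show m+1+1 = m+2 from rfl] at *
      rw [hqrec m, hc2]
      push_cast
      push_cast at ih
      ring_nf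
      ring_nf at ih
      linarith [ih]
  -- conclusion
  match s, hs with
  | 1, _ =>
    refine ⟨by rw [hq0], by simp [cfp, hq0], ha 0, ?_⟩
    have hm := hθmul 0
    rw [hθ0] at hm
    have hθ1 := hθpos 1
    have hA1 : (1:ℝ) ≤ (a 1 : ℝ) := by exact_mod_cast ha 0
    simp only [show (1:ℕ)-1 = 0 from rfl, cfp, hq0, Nat.cast_zero, Nat.cast_one]
    rw [zero_div, sub_zero, one_pow, mul_one, abs_of_nonneg hω0, le_div_iff₀ (by linarith)]
    nlinarith
  | (n+2), _ =>
    simp only [show (n+2)-1 = n+1 from rfl]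
    refine ⟨hqpos (n+1), hpq (n+1), ha (n+1), ?_⟩
    have hQ1pos : (0:ℝ) < (q (n+1) : ℝ) := by exact_mod_cast hqpos (n+1)
    have hQ0nn : (0:ℝ) ≤ (q n : ℝ) := Nat.cast_nonneg _
    have hθ' := hθpos (n+1)
    have hθ2 := hθpos (n+2)
    have hA : (1:ℝ) ≤ (a (n+2) : ℝ) := by exact_mod_cast ha (n+1)
    have key2 : ((cfp a n : ℝ) - ω * (q n : ℝ)) * ((q (n+1) : ℝ) + (q n : ℝ) * θ (n+1))
        = (cfp a n : ℝ) * (q (n+1) : ℝ) - (cfp a (n+1) : ℝ) * (q n : ℝ) := by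
      linear_combination (-(q n : ℝ)) * hid n
    have habs : |(cfp a n : ℝ) * (q (n+1) : ℝ) - (cfp a (n+1) : ℝ) * (q n : ℝ)| = 1 := by
      have := hdet n
      have h' : ((cfp a n : ℝ) * (q (n+1) : ℝ) - (cfp a (n+1) : ℝ) * (q n : ℝ)) = ((-1:ℝ))^(n+1) := by
        exact_mod_cast congrArg (fun z : ℤ => (z : ℝ)) this
      rw [h', abs_pow, abs_neg, abs_one, one_pow]
    have h1 : |(cfp a n : ℝ) - ω * (q n : ℝ)| * ((q (n+1) : ℝ) + (q n : ℝ) * θ (n+1)) = 1 := by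
      rw [← abs_of_pos (show (0:ℝ) < (q (n+1) : ℝ) + (q n : ℝ) * θ (n+1) by positivity),
        ← abs_mul, key2, habs]
    have h2 : |(cfp a n : ℝ) - ω * (q n : ℝ)| ≤ 1 / (q (n+1) : ℝ) := by
      rw [le_div_iff₀ hQ1pos]
      nlinarith [mul_nonneg (abs_nonneg ((cfp a n : ℝ) - ω * (q n : ℝ))) (mul_nonneg hQ0nn hθ'.le)]
    have h3 : ω * (q (n+1) : ℝ) - (cfp a (n+1) : ℝ) = θ (n+1) * ((cfp a n : ℝ) - ω * (q n : ℝ)) := by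
      linear_combination hid n
    have h4 : |ω * (q (n+1) : ℝ) - (cfp a (n+1) : ℝ)| ≤ θ (n+1) / (q (n+1) : ℝ) := by
      rw [h3, abs_mul, abs_of_pos hθ']
      calc θ (n+1) * |(cfp a n : ℝ) - ω * (q n : ℝ)| ≤ θ (n+1) * (1 / (q (n+1) : ℝ)) :=
            mul_le_mul_of_nonneg_left h2 (le_of_lt hθ')
        _ = θ (n+1) / (q (n+1) : ℝ) := by ring
    have hθa : θ (n+1) * (a (n+2) : ℝ) ≤ 1 := by nlinarith [hθmul (n+1)]
    have e1 : ω - (cfp a (n+1) : ℝ) / (q (n+1) : ℝ)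
        = (ω * (q (n+1) : ℝ) - (cfp a (n+1) : ℝ)) / (q (n+1) : ℝ) := by
      field_simp
    rw [e1, abs_div, abs_of_pos hQ1pos, div_le_div_iff₀ hQ1pos (by positivity)]
    calc |ω * (q (n+1) : ℝ) - (cfp a (n+1) : ℝ)| * ((a (n+2) : ℝ) * (q (n+1) : ℝ)^2)
        ≤ (θ (n+1) / (q (n+1) : ℝ)) * ((a (n+2) : ℝ) * (q (n+1) : ℝ)^2) := by
          apply mul_le_mul_of_nonneg_right h4; positivity
      _ = (θ (n+1) * (a (n+2) : ℝ)) * (q (n+1) : ℝ) := by field_simp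
      _ ≤ 1 * (q (n+1) : ℝ) := mul_le_mul_of_nonneg_right hθa (le_of_lt hQ1pos)

/-- The set of `ω ∈ [0,1]` having a large partial quotient `a_s(ω) > N^ε` at
the scale `q_{s-1}(ω) ≤ N < q_s(ω)` has measure `≤ N^{-ε/2}`. -/
theorem stmt_18 (ε : ℝ) (hε : 0 < ε) :
    ∃ N₀ : ℕ, ∀ N : ℕ, N₀ < N →
      volume {ω ∈ Set.Icc (0:ℝ) 1 | ∃ a q : ℕ → ℕ, ∃ s : ℕ,
          IsCF ω a q ∧ 1 ≤ s ∧ q (s - 1) ≤ N ∧ N < q s ∧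
          (N : ℝ) ^ ε < (a s : ℝ)}
        ≤ ENNReal.ofReal ((N : ℝ) ^ (-(ε / 2))) := by
  set M : ℝ := max 1 (128 / ε^2) with hM
  refine ⟨⌈Real.exp M⌉₊ + 3, fun N hN => ?_⟩
  have hNpos : (0:ℝ) < N := by
    have : 0 < N := by omega
    exact_mod_cast this
  have hexpM : Real.exp M ≤ (N : ℝ) := by
    have h1 : Real.exp M ≤ (⌈Real.exp M⌉₊ : ℝ) := Nat.le_ceil _
    have h2 : (⌈Real.exp M⌉₊ : ℝ) ≤ (N : ℝ) := by exact_mod_cast (by omega : ⌈Real.exp M⌉₊ ≤ N)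
    linarith
  have hlog : M ≤ Real.log N := (Real.le_log_iff_exp_le hNpos).mpr hexpM
  set L : ℝ := Real.log N with hL
  have hL1 : (1:ℝ) ≤ L := le_trans (le_max_left _ _) hlog
  have hL128 : 128 / ε^2 ≤ L := le_trans (le_max_right _ _) hlog
  -- covering
  have hcover : {ω ∈ Set.Icc (0:ℝ) 1 | ∃ a q : ℕ → ℕ, ∃ s : ℕ,
      IsCF ω a q ∧ 1 ≤ s ∧ q (s - 1) ≤ N ∧ N < q s ∧ (N : ℝ) ^ ε < (a s : ℝ)}
      ⊆ ⋃ Q ∈ Finset.Icc 1 N, ⋃ p ∈ Finset.range (Q+1),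
          Metric.closedBall ((p:ℝ)/(Q:ℝ)) ((N:ℝ)^(-ε) / (Q:ℝ)^2) := by
    rintro ω ⟨⟨hω0, hω1⟩, a, q, s, hcf, hs, hqN, hNq, haN⟩
    obtain ⟨hQ1, hpQ, haS, hbound⟩ := cf_approx ω a q hcf hω0 hω1 s hs
    refine Set.mem_iUnion₂.mpr ⟨q (s-1), Finset.mem_Icc.mpr ⟨hQ1, hqN⟩, ?_⟩
    refine Set.mem_iUnion₂.mpr ⟨cfp a (s-1), Finset.mem_range.mpr (by omega), ?_⟩
    rw [Metric.mem_closedBall, Real.dist_eq]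
    have hQpos : (0:ℝ) < (q (s-1) : ℝ) := by exact_mod_cast hQ1
    have hNε : (0:ℝ) < (N:ℝ)^ε := Real.rpow_pos_of_pos hNpos ε
    have h2 : (1:ℝ) / ((a s : ℝ) * (q (s-1) : ℝ)^2) ≤ (N:ℝ)^(-ε) / (q (s-1) : ℝ)^2 := by
      have e : (N:ℝ)^(-ε) / (q (s-1) : ℝ)^2 = 1 / ((N:ℝ)^ε * (q (s-1) : ℝ)^2) := by
        rw [Real.rpow_neg (le_of_lt hNpos)]; field_simp
      rw [e]
      apply one_div_le_one_div_of_le (by positivity)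
      exact mul_le_mul_of_nonneg_right (le_of_lt haN) (by positivity)
    exact le_trans hbound h2
  calc volume {ω ∈ Set.Icc (0:ℝ) 1 | ∃ a q : ℕ → ℕ, ∃ s : ℕ,
          IsCF ω a q ∧ 1 ≤ s ∧ q (s - 1) ≤ N ∧ N < q s ∧ (N : ℝ) ^ ε < (a s : ℝ)}
      ≤ volume (⋃ Q ∈ Finset.Icc 1 N, ⋃ p ∈ Finset.range (Q+1),
          Metric.closedBall ((p:ℝ)/(Q:ℝ)) ((N:ℝ)^(-ε) / (Q:ℝ)^2)) := measure_mono hcover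
    _ ≤ ∑ Q ∈ Finset.Icc 1 N, volume (⋃ p ∈ Finset.range (Q+1),
          Metric.closedBall ((p:ℝ)/(Q:ℝ)) ((N:ℝ)^(-ε) / (Q:ℝ)^2)) :=
        measure_biUnion_finset_le _ _
    _ ≤ ∑ Q ∈ Finset.Icc 1 N, ENNReal.ofReal (4 * (N:ℝ)^(-ε) / (Q:ℝ)) := by
        apply Finset.sum_le_sum
        intro Q hQ
        have hQ1 : 1 ≤ Q := (Finset.mem_Icc.mp hQ).1
        have hQr : (1:ℝ) ≤ (Q:ℝ) := by exact_mod_cast hQ1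
        calc volume (⋃ p ∈ Finset.range (Q+1),
              Metric.closedBall ((p:ℝ)/(Q:ℝ)) ((N:ℝ)^(-ε) / (Q:ℝ)^2))
            ≤ ∑ p ∈ Finset.range (Q+1), volume
                (Metric.closedBall ((p:ℝ)/(Q:ℝ)) ((N:ℝ)^(-ε) / (Q:ℝ)^2)) :=
              measure_biUnion_finset_le _ _
          _ = ∑ p ∈ Finset.range (Q+1), ENNReal.ofReal (2 * ((N:ℝ)^(-ε) / (Q:ℝ)^2)) := by
              simp [Real.volume_closedBall]
          _ = (Q+1 : ℕ) * ENNReal.ofReal (2 * ((N:ℝ)^(-ε) / (Q:ℝ)^2)) := by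
              rw [Finset.sum_const, Finset.card_range]; simp [nsmul_eq_mul]
          _ = ENNReal.ofReal (((Q:ℝ)+1) * (2 * ((N:ℝ)^(-ε) / (Q:ℝ)^2))) := by
              rw [← ENNReal.ofReal_natCast (Q+1), ← ENNReal.ofReal_mul (by positivity)]
              congr 1
              push_cast
              ring
          _ ≤ ENNReal.ofReal (4 * (N:ℝ)^(-ε) / (Q:ℝ)) := by
              apply ENNReal.ofReal_le_ofReal
              have hNε : (0:ℝ) < (N:ℝ)^(-ε) := Real.rpow_pos_of_pos hNpos _
              have e : (4:ℝ) * (N:ℝ)^(-ε) / (Q:ℝ) = (4*(Q:ℝ)) * ((N:ℝ)^(-ε)/(Q:ℝ)^2) := by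
                field_simp
              have e2 : ((Q:ℝ)+1) * (2 * ((N:ℝ)^(-ε)/(Q:ℝ)^2))
                  = (((Q:ℝ)+1)*2) * ((N:ℝ)^(-ε)/(Q:ℝ)^2) := by ring
              rw [e, e2]
              apply mul_le_mul_of_nonneg_right (by nlinarith) (by positivity)
    _ = ENNReal.ofReal (∑ Q ∈ Finset.Icc 1 N, 4 * (N:ℝ)^(-ε) / (Q:ℝ)) := by
        rw [ENNReal.ofReal_sum_of_nonneg]
        intro Q hQ
        positivity
    _ ≤ ENNReal.ofReal ((N : ℝ) ^ (-(ε / 2))) := by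
        apply ENNReal.ofReal_le_ofReal
        have hNε : (0:ℝ) < (N:ℝ)^(-ε) := Real.rpow_pos_of_pos hNpos _
        have hharm : (harmonic N : ℝ) = ∑ Q ∈ Finset.Icc 1 N, ((Q:ℝ))⁻¹ := by
          rw [harmonic_eq_sum_Icc]; push_cast; ring
        have hsum : ∑ Q ∈ Finset.Icc 1 N, 4 * (N:ℝ)^(-ε) / (Q:ℝ)
            = 4 * (N:ℝ)^(-ε) * (harmonic N : ℝ) := by
          rw [hharm, Finset.mul_sum]
          apply Finset.sum_congr rfl
          intros; rw [div_eq_mul_inv]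
        rw [hsum]
        have hh : (harmonic N : ℝ) ≤ 1 + L := harmonic_le_one_add_log N
        have hharm0 : (0:ℝ) ≤ (harmonic N : ℝ) := by rw [hharm]; positivity
        -- key exponential inequality
        have h128 : (128:ℝ) ≤ L * ε^2 := by
          rw [div_le_iff₀ (by positivity)] at hL128
          linarith
        have hexp1 : (1 + L*ε/4) ≤ Real.exp (L*ε/4) := by
          linarith [Real.add_one_le_exp (L*ε/4)]
        have hsq : (1 + L*ε/4)^2 ≤ (Real.exp (L*ε/4))^2 :=
          pow_le_pow_left₀ (by positivity) hexp1 2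
        have hexp2 : (Real.exp (L*ε/4))^2 = Real.exp (L*(ε/2)) := by
          rw [← Real.exp_nat_mul]
          norm_num
          ring_nf
        have hLnn : (0:ℝ) ≤ L := by linarith
        have hpoly : 4*(1+L) ≤ (1 + L*ε/4)^2 := by
          nlinarith [mul_le_mul_of_nonneg_left h128 hLnn,
            mul_nonneg hLnn (le_of_lt hε)]
        have key : 4*(1+L) ≤ (N:ℝ)^(ε/2) := by
          rw [Real.rpow_def_of_pos hNpos, ← hL]
          calc 4*(1+L) ≤ (1 + L*ε/4)^2 := hpoly
            _ ≤ (Real.exp (L*ε/4))^2 := hsq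
            _ = Real.exp (L*(ε/2)) := hexp2
        have hrw : (N:ℝ)^(-(ε/2)) = (N:ℝ)^(-ε) * (N:ℝ)^(ε/2) := by
          rw [← Real.rpow_add hNpos]
          congr 1
          ring
        calc 4 * (N:ℝ)^(-ε) * (harmonic N : ℝ)
            ≤ 4 * (N:ℝ)^(-ε) * (1 + L) := by
              apply mul_le_mul_of_nonneg_left hh (by positivity)
          _ = (N:ℝ)^(-ε) * (4*(1+L)) := by ring
          _ ≤ (N:ℝ)^(-ε) * (N:ℝ)^(ε/2) :=
              mul_le_mul_of_nonneg_left key (le_of_lt hNε)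
          _ = (N:ℝ)^(-(ε/2)) := hrw.symm
end
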